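/- For γ > 0 and t₄ ∈ ℝ, define the quartic spectral density ρ(x) = (1/2π)(t₄(x² − γ²) + 1/γ²)√(4γ² − x²) for x ∈ [−2γ, 2γ] (and ρ = 0 outside), and set c = (1 − 3t₄γ⁴)/γ². Then for every real x with x > 2γ, ∫_{−2γ}^{2γ} ρ(y)/(x − y) dy = (1/2)( c·x + t₄x³ − (t₄(x² − γ²) + 1/γ²)√(x² − 4γ²) ). -/

import Mathlib

/-!
Put `R = 2γ` and `P(y) = t₄(y² - γ²) + 1/γ²`. Since `P(y) = P(x) - t₄(x - y)(x + y)`, `2π` times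
the transform of `ρ` is `P(x)` times the Stieltjes transform of the semicircle `√(R² - y²)`,
which is `π(x - √(x² - R²))`, minus `t₄ ∫ (x + y) √(R² - y²) dy = t₄ x πR²/2` (the odd part
integrates to zero). The semicircle transform has an elementary primitive, with one `arcsin`
term coming from a Möbius substitution.
-/

open Real Set intervalIntegral
open MeasureTheory (volume)

section Semicircle

variable {R x y : ℝ}

theorem integral_sqrt_sq_sub_sq (hR : 0 ≤ R) :
    ∫ y in -R..R, √(R ^ 2 - y ^ 2) = π * R ^ 2 / 2 := by
  have hscale : ∀ u : ℝ, √(R ^ 2 - (R * u) ^ 2) = R * √(1 - u ^ 2) := fun u => by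
    rw [show R ^ 2 - (R * u) ^ 2 = R ^ 2 * (1 - u ^ 2) by ring, sqrt_mul (sq_nonneg R),
      sqrt_sq hR]
  have h := smul_integral_comp_mul_left (fun y => √(R ^ 2 - y ^ 2)) R (a := -1) (b := 1)
  simp only [hscale, integral_const_mul, integral_sqrt_one_sub_sq, mul_neg, mul_one,
    smul_eq_mul] at h
  rw [← h]
  ring

theorem integral_mul_sqrt_sq_sub_sq (R : ℝ) : ∫ y in -R..R, y * √(R ^ 2 - y ^ 2) = 0 := by
  have h := integral_comp_neg (a := -R) (b := R) fun y => y * √(R ^ 2 - y ^ 2)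
  simp only [neg_sq, neg_mul, integral_neg, neg_neg] at h
  linarith

theorem hasDerivAt_sqrt_sq_sub_sq (hy : y ∈ Ioo (-R) R) :
    HasDerivAt (fun t => √(R ^ 2 - t ^ 2)) (-y / √(R ^ 2 - y ^ 2)) y := by
  have hpos : 0 < R ^ 2 - y ^ 2 := by nlinarith [hy.1, hy.2]
  refine (((hasDerivAt_pow 2 y).const_sub (R ^ 2)).sqrt hpos.ne').congr_deriv ?_
  field_simp
  ring

theorem hasDerivAt_arcsin_div (hy : y ∈ Ioo (-R) R) :
    HasDerivAt (fun t => arcsin (t / R)) (1 / √(R ^ 2 - y ^ 2)) y := by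
  obtain ⟨hy₁, hy₂⟩ := hy
  have hR : 0 < R := by linarith
  have hsqrt : √(1 - (y / R) ^ 2) = √(R ^ 2 - y ^ 2) / R := by
    rw [show 1 - (y / R) ^ 2 = (R ^ 2 - y ^ 2) / R ^ 2 by field_simp, sqrt_div' _ (sq_nonneg R),
      sqrt_sq hR.le]
  have hne₁ : y / R ≠ -1 := by rw [ne_eq, div_eq_iff hR.ne']; linarith
  have hne₂ : y / R ≠ 1 := by rw [ne_eq, div_eq_iff hR.ne']; linarith
  refine ((hasDerivAt_arcsin hne₁ hne₂).comp y ((hasDerivAt_id y).div_const R)).congr_deriv ?_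
  rw [hsqrt]
  field_simp

/-- `t ↦ (R² - x t) / (R (x - t))` maps `(-R, R)` onto `(-1, 1)` when `R < x`. -/
theorem hasDerivAt_arcsin_moebius (hy : y ∈ Ioo (-R) R) (hx : R < x) :
    HasDerivAt (fun t => arcsin ((R ^ 2 - x * t) / (R * (x - t))))
      (-(√(x ^ 2 - R ^ 2) / ((x - y) * √(R ^ 2 - y ^ 2)))) y := by
  obtain ⟨hy₁, hy₂⟩ := hy
  have hR : 0 < R := by linarith
  have hxy : 0 < x - y := by linarith
  have hden : 0 < R * (x - y) := by positivity
  have hne₁ : (R ^ 2 - x * y) / (R * (x - y)) ≠ -1 := by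
    rw [ne_eq, div_eq_iff hden.ne']
    nlinarith [mul_pos (sub_pos.2 hx) (neg_lt_iff_pos_add.1 hy₁)]
  have hne₂ : (R ^ 2 - x * y) / (R * (x - y)) ≠ 1 := by
    rw [ne_eq, div_eq_iff hden.ne']
    nlinarith [mul_pos (show 0 < x + R by linarith) (sub_pos.2 hy₂)]
  have hsqrt : √(1 - ((R ^ 2 - x * y) / (R * (x - y))) ^ 2)
      = √(x ^ 2 - R ^ 2) * √(R ^ 2 - y ^ 2) / (R * (x - y)) := by
    rw [show 1 - ((R ^ 2 - x * y) / (R * (x - y))) ^ 2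
        = (x ^ 2 - R ^ 2) * (R ^ 2 - y ^ 2) / (R * (x - y)) ^ 2 by field_simp; ring,
      sqrt_div' _ (sq_nonneg _), sqrt_mul (by nlinarith), sqrt_sq hden.le]
  have hmoeb : HasDerivAt (fun t => (R ^ 2 - x * t) / (R * (x - t)))
      (-(x ^ 2 - R ^ 2) / (R * (x - y) ^ 2)) y := by
    refine ((((hasDerivAt_id y).const_mul x).const_sub (R ^ 2)).div
      (((hasDerivAt_id y).const_sub x).const_mul R) hden.ne').congr_deriv ?_
    simp only [id]
    field_simp
    ring
  refine ((hasDerivAt_arcsin hne₁ hne₂).comp y hmoeb).congr_deriv ?_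
  have hs : 0 < √(x ^ 2 - R ^ 2) := sqrt_pos.2 (by nlinarith)
  have hg : 0 < √(R ^ 2 - y ^ 2) := sqrt_pos.2 (by nlinarith)
  rw [hsqrt]
  field_simp
  rw [sq_sqrt (by nlinarith)]

/-- Integrates `√(R² - y²) / (x - y) = (x + y) / √(R² - y²) - (x² - R²) / ((x - y) √(R² - y²))`
term by term. -/
noncomputable def semicircleStieltjesPrimitive (R x y : ℝ) : ℝ :=
  x * arcsin (y / R) - √(R ^ 2 - y ^ 2) +
    √(x ^ 2 - R ^ 2) * arcsin ((R ^ 2 - x * y) / (R * (x - y)))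

theorem hasDerivAt_semicircleStieltjesPrimitive (hy : y ∈ Ioo (-R) R) (hx : R < x) :
    HasDerivAt (semicircleStieltjesPrimitive R x) (√(R ^ 2 - y ^ 2) / (x - y)) y := by
  refine ((((hasDerivAt_arcsin_div hy).const_mul x).sub (hasDerivAt_sqrt_sq_sub_sq hy)).add
    ((hasDerivAt_arcsin_moebius hy hx).const_mul _)).congr_deriv ?_
  obtain ⟨hy₁, hy₂⟩ := hy
  have hxy : 0 < x - y := by linarith
  have hg : 0 < √(R ^ 2 - y ^ 2) := sqrt_pos.2 (by nlinarith)
  field_simp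
  rw [sq_sqrt (by nlinarith), sq_sqrt (by nlinarith)]
  ring

theorem continuousOn_semicircleStieltjesPrimitive (hR : 0 < R) (hx : R < x) :
    ContinuousOn (semicircleStieltjesPrimitive R x) (Icc (-R) R) := by
  have hden : ∀ y ∈ Icc (-R) R, R * (x - y) ≠ 0 := fun y hy => by
    have : 0 < x - y := by linarith [hy.2]
    positivity
  unfold semicircleStieltjesPrimitive
  fun_prop (disch := assumption)

theorem intervalIntegrable_sqrt_sq_sub_sq_div_sub (hR : 0 ≤ R) (hx : R < x) :
    IntervalIntegrable (fun y => √(R ^ 2 - y ^ 2) / (x - y)) volume (-R) R := by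
  refine ContinuousOn.intervalIntegrable ?_
  have : ∀ y ∈ uIcc (-R) R, x - y ≠ 0 := fun y hy => by
    rw [uIcc_of_le (by linarith)] at hy
    linarith [hy.2]
  fun_prop (disch := assumption)

theorem integral_sqrt_sq_sub_sq_div_sub (hR : 0 < R) (hx : R < x) :
    ∫ y in -R..R, √(R ^ 2 - y ^ 2) / (x - y) = π * (x - √(x ^ 2 - R ^ 2)) := by
  have hle : -R ≤ R := by linarith
  rw [integral_eq_sub_of_hasDerivAt_of_le hle (continuousOn_semicircleStieltjesPrimitive hR hx)
    (fun y hy => hasDerivAt_semicircleStieltjesPrimitive hy hx)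
    (intervalIntegrable_sqrt_sq_sub_sq_div_sub hR.le hx)]
  have h₁ : (R ^ 2 - x * R) / (R * (x - R)) = -1 := by
    rw [div_eq_iff (mul_pos hR (by linarith)).ne']; ring
  have h₂ : (R ^ 2 - x * -R) / (R * (x - -R)) = 1 := by
    rw [div_eq_iff (mul_pos hR (by linarith)).ne']; ring
  simp only [semicircleStieltjesPrimitive, h₁, h₂, div_self hR.ne', neg_div, arcsin_one,
    arcsin_neg, neg_sq, sub_self, sqrt_zero]
  ring

end Semicircle

/-- The Stieltjes transform of the quartic spectral density equals the planar
resolvent: for `x > 2γ`,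
`∫_{-2γ}^{2γ} ρ(y)/(x - y) dy = (1/2)(cx + t₄x³ - (t₄(x² - γ²) + 1/γ²)√(x² - 4γ²))`
with `c = (1 - 3t₄γ⁴)/γ²`. -/
theorem quartic_stieltjes (γ t₄ : ℝ) (hγ : 0 < γ) (x : ℝ) (hx : 2 * γ < x) :
    ∫ y in (-(2 * γ))..(2 * γ),
        ((1 / (2 * Real.pi)) * (t₄ * (y ^ 2 - γ ^ 2) + 1 / γ ^ 2) *
          Real.sqrt (4 * γ ^ 2 - y ^ 2)) / (x - y) =
      (1 / 2) * (((1 - 3 * t₄ * γ ^ 4) / γ ^ 2) * x + t₄ * x ^ 3 -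
        (t₄ * (x ^ 2 - γ ^ 2) + 1 / γ ^ 2) * Real.sqrt (x ^ 2 - 4 * γ ^ 2)) := by
  set R := 2 * γ with hRγ
  have hR : 0 < R := by positivity
  rw [show 4 * γ ^ 2 = R ^ 2 by ring]
  set P : ℝ → ℝ := fun y => t₄ * (y ^ 2 - γ ^ 2) + 1 / γ ^ 2
  have hsplit : ∀ y ∈ uIcc (-R) R, (1 / (2 * π)) * P y * √(R ^ 2 - y ^ 2) / (x - y)
      = (1 / (2 * π)) * (P x * (√(R ^ 2 - y ^ 2) / (x - y))
        - t₄ * x * √(R ^ 2 - y ^ 2) - t₄ * (y * √(R ^ 2 - y ^ 2))) := fun y hy => by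
    rw [uIcc_of_le (by linarith)] at hy
    have : x - y ≠ 0 := by linarith [hy.2]
    field_simp
    ring
  have hsing := (intervalIntegrable_sqrt_sq_sub_sq_div_sub hR.le hx).const_mul (P x)
  have hsqrt : IntervalIntegrable (fun y => t₄ * x * √(R ^ 2 - y ^ 2)) volume (-R) R :=
    Continuous.intervalIntegrable (by fun_prop) _ _
  have hodd : IntervalIntegrable (fun y => t₄ * (y * √(R ^ 2 - y ^ 2))) volume (-R) R :=
    Continuous.intervalIntegrable (by fun_prop) _ _
  rw [integral_congr hsplit, integral_const_mul, integral_sub (hsing.sub hsqrt) hodd,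
    integral_sub hsing hsqrt, integral_const_mul, integral_const_mul, integral_const_mul,
    integral_sqrt_sq_sub_sq_div_sub hR hx, integral_sqrt_sq_sub_sq hR.le,
    integral_mul_sqrt_sq_sub_sq]
  simp only [P, hRγ]
  field_simp
  ring
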